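/- arXiv:math/9911132 — 5 statements merged into one kernel-verified Lean document; each statement's English description precedes it below -/
import Mathlib

section
/- (Solutions of Heisenberg type.) Let R be a ring with an additive map d : R → R and a ring homomorphism σ : R → R satisfying σ∘σ = id, d∘d = 0, σ∘d = −d∘σ, and d(ab) = d(a)b + σ(a)d(b). Let l ≥ 1 and let A be the (l+2)×(l+2) matrix over R (rows and columns indexed 1,…,l+2) whose only possibly nonzero entries are A_{1, i+1} = a_i and A_{i+1, l+2} = b_i for 1 ≤ i ≤ l, and A_{1, l+2} = c. Then the (1, l+2) entry of μ(A) = D(A) − Σ(A)·A equals d(c) − Σ_{i=1}^{l} σ(a_i)·b_i, every entry of μ(A) outside positions (1, i+1), (i+1, l+2) (1 ≤ i ≤ l) and (1, l+2) vanishes, and all entries of μ(A) except possibly the (1, l+2) entry vanish if and only if d(a_i) = 0 and d(b_i) = 0 for all 1 ≤ i ≤ l. -/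
section heisHelpers
variable {R : Type*} [Ring R]

lemma heis_stdBasisMatrix_sub {n : Type*} [DecidableEq n] (i j : n) (x y : R) :
    Matrix.single i j (x - y)
      = Matrix.single i j x - Matrix.single i j y := by
  ext p q
  simp only [Matrix.single, Matrix.of_apply, Matrix.sub_apply]
  split <;> simp

lemma heis_stdBasisMatrix_sum {n : Type*} [DecidableEq n] (i j : n)
    {ι : Type*} (s : Finset ι) (f : ι → R) :
    Matrix.single i j (∑ k ∈ s, f k)
      = ∑ k ∈ s, Matrix.single i j (f k) := by
  ext p q
  simp only [Matrix.single, Matrix.of_apply, Matrix.sum_apply]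
  by_cases h : i = p ∧ j = q <;> simp [h]

lemma heis_map {F : Type*} [FunLike F R R] [AddMonoidHomClass F R R] (f : F)
    (l : ℕ) (a b : Fin l → R) (c : R)
    (A : Matrix (Fin (l + 2)) (Fin (l + 2)) R)
    (hA : A = Matrix.single 0 (Fin.last (l + 1)) c
        + ∑ i : Fin l, Matrix.single 0 i.succ.castSucc (a i)
        + ∑ i : Fin l, Matrix.single i.succ.castSucc (Fin.last (l + 1)) (b i)) :
    A.map f = Matrix.single 0 (Fin.last (l + 1)) (f c)
        + ∑ i : Fin l, Matrix.single 0 i.succ.castSucc (f (a i))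
        + ∑ i : Fin l, Matrix.single i.succ.castSucc (Fin.last (l + 1)) (f (b i)) := by
  subst hA
  ext p q
  simp only [Matrix.map_apply, Matrix.add_apply, Matrix.sum_apply, map_add, map_sum,
    Matrix.single, Matrix.of_apply, apply_ite f, map_zero]

end heisHelpers

/-- solutions of Heisenberg type: for the `(l+2)×(l+2)` matrix `A`
with first row `(0, a_1, …, a_l, c)`, last column `(c, b_1, …, b_l, 0)ᵀ` and all
other entries zero, the curvature `μ(A) = D(A) − Σ(A)·A` has `(1, l+2)` entry
`d(c) − ∑ σ(a_i)·b_i`, vanishes outside the positions `(1, i+1)`, `(i+1, l+2)`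
`(1 ≤ i ≤ l)` and `(1, l+2)`, and is supported in the `(1, l+2)` entry alone
iff all `a_i`, `b_i` are closed. -/
theorem heisenberg_type_solutions
    {R : Type*} [Ring R] (l : ℕ) (hl : 1 ≤ l)
    (d : R →+ R) (σ : R →+* R)
    (hσσ : ∀ a : R, σ (σ a) = a)
    (hdd : ∀ a : R, d (d a) = 0)
    (hσd : ∀ a : R, σ (d a) = - d (σ a))
    (hleib : ∀ a b : R, d (a * b) = d a * b + σ a * d b)
    (a b : Fin l → R) (c : R)
    (A : Matrix (Fin (l + 2)) (Fin (l + 2)) R)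
    (hA : A = Matrix.single 0 (Fin.last (l + 1)) c
        + ∑ i : Fin l, Matrix.single 0 i.succ.castSucc (a i)
        + ∑ i : Fin l, Matrix.single i.succ.castSucc (Fin.last (l + 1)) (b i)) :
    (A.map d - A.map σ * A) 0 (Fin.last (l + 1))
        = d c - ∑ i : Fin l, σ (a i) * b i ∧
    (∀ p q : Fin (l + 2),
      ¬ ((p = 0 ∧ ∃ i : Fin l, q = i.succ.castSucc) ∨
         ((∃ i : Fin l, p = i.succ.castSucc) ∧ q = Fin.last (l + 1)) ∨
         (p = 0 ∧ q = Fin.last (l + 1))) →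
      (A.map d - A.map σ * A) p q = 0) ∧
    ((∀ p q : Fin (l + 2), ¬ (p = 0 ∧ q = Fin.last (l + 1)) →
        (A.map d - A.map σ * A) p q = 0) ↔
      ∀ i : Fin l, d (a i) = 0 ∧ d (b i) = 0) := by
  -- basic distinctness facts about the index set
  have h0last : (0 : Fin (l+2)) ≠ Fin.last (l+1) := by simp [Fin.ext_iff]
  have hsc0 : ∀ i : Fin l, (i.succ.castSucc : Fin (l+2)) ≠ 0 := by simp [Fin.ext_iff]
  have hsclast : ∀ i : Fin l, (i.succ.castSucc : Fin (l+2)) ≠ Fin.last (l+1) := by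
    intro i h; have := congrArg Fin.val h; simp [Fin.val_succ] at this; omega
  have hscinj : ∀ i j : Fin l,
      (i.succ.castSucc : Fin (l+2)) = j.succ.castSucc → i = j := by
    intro i j h
    have := congrArg Fin.val h
    simp [Fin.val_succ] at this
    exact Fin.ext this
  have hlast0 : (Fin.last (l+1) : Fin (l+2)) ≠ 0 := h0last.symm
  have hlastsc : ∀ i : Fin l, (Fin.last (l+1) : Fin (l+2)) ≠ i.succ.castSucc :=
    fun i => (hsclast i).symm
  -- the product `Σ(A)·A`
  have hprod : A.map σ * A = Matrix.single (0 : Fin (l+2)) (Fin.last (l + 1))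
      (∑ i : Fin l, σ (a i) * b i) := by
    rw [heis_stdBasisMatrix_sum]
    rw [heis_map σ l a b c A hA, hA]
    simp only [add_mul, mul_add, Finset.sum_mul, Finset.mul_sum,
      Matrix.single_mul_single_of_ne, hlast0, hlastsc, hsc0, ne_eq, not_false_eq_true,
      Finset.sum_const_zero, add_zero, zero_add]
    refine Finset.sum_congr rfl fun i _ => ?_
    rw [Finset.sum_eq_single_of_mem i (Finset.mem_univ i)]
    · exact Matrix.single_mul_single_same _ _ _ _ _
    · intro j _ hj
      refine Matrix.single_mul_single_of_ne (h := fun h => hj ?_) ..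
      exact hscinj j i h
  -- the curvature as an explicit matrix
  have hμ : A.map d - A.map σ * A
      = Matrix.single (0 : Fin (l+2)) (Fin.last (l + 1))
          (d c - ∑ i : Fin l, σ (a i) * b i)
        + ∑ i : Fin l, Matrix.single 0 i.succ.castSucc (d (a i))
        + ∑ i : Fin l, Matrix.single i.succ.castSucc (Fin.last (l + 1)) (d (b i)) := by
    rw [heis_map d l a b c A hA, hprod, heis_stdBasisMatrix_sub]
    abel
  -- the three claims
  refine ⟨?_, ?_, ?_, ?_⟩
  · rw [hμ]
    simp only [Matrix.add_apply, Matrix.sum_apply]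
    rw [Matrix.single_apply_same,
      Finset.sum_eq_zero (fun i _ => Matrix.single_apply_of_col_ne _ _ (hsclast i) _),
      Finset.sum_eq_zero (fun i _ => Matrix.single_apply_of_row_ne (hsc0 i) _ _ _),
      add_zero, add_zero]
  · intro p q hpq
    push_neg at hpq
    obtain ⟨h1, h2, h3⟩ := hpq
    rw [hμ]
    simp only [Matrix.add_apply, Matrix.sum_apply]
    have t1 : Matrix.single (0 : Fin (l+2)) (Fin.last (l+1))
        (d c - ∑ i : Fin l, σ (a i) * b i) p q = 0 :=
      Matrix.single_apply_of_ne _ _ _ _ _ (fun ⟨e1, e2⟩ => h3 e1.symm e2.symm)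
    have t2 : ∀ i : Fin l,
        Matrix.single (0 : Fin (l+2)) i.succ.castSucc (d (a i)) p q = 0 :=
      fun i => Matrix.single_apply_of_ne _ _ _ _ _ (fun ⟨e1, e2⟩ => h1 e1.symm i e2.symm)
    have t3 : ∀ i : Fin l,
        Matrix.single (i.succ.castSucc : Fin (l+2)) (Fin.last (l+1)) (d (b i)) p q = 0 :=
      fun i => Matrix.single_apply_of_ne _ _ _ _ _ (fun ⟨e1, e2⟩ => h2 ⟨i, e1.symm⟩ e2.symm)
    rw [t1, Finset.sum_eq_zero (fun i _ => t2 i), Finset.sum_eq_zero (fun i _ => t3 i),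
      add_zero, add_zero]
  · intro h i
    constructor
    · have := h 0 i.succ.castSucc (fun hc => hsclast i hc.2)
      rw [hμ] at this
      simp only [Matrix.add_apply, Matrix.sum_apply] at this
      rwa [Matrix.single_apply_of_col_ne _ _ (hlastsc i) _,
        Finset.sum_eq_single_of_mem i (Finset.mem_univ i)
          (fun j _ hj => Matrix.single_apply_of_col_ne _ _
            (fun hc => hj (hscinj j i hc)) _),
        Matrix.single_apply_same,
        Finset.sum_eq_zero (fun j _ => Matrix.single_apply_of_row_ne (hsc0 j) _ _ _),
        zero_add, add_zero] at this
    · have := h i.succ.castSucc (Fin.last (l+1)) (fun hc => hsc0 i hc.1)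
      rw [hμ] at this
      simp only [Matrix.add_apply, Matrix.sum_apply] at this
      rwa [Matrix.single_apply_of_row_ne (hsc0 i).symm _ _ _,
        Finset.sum_eq_zero (fun j _ => Matrix.single_apply_of_row_ne (hsc0 i).symm _ _ _),
        Finset.sum_eq_single_of_mem i (Finset.mem_univ i)
          (fun j _ hj => Matrix.single_apply_of_row_ne
            (fun hc => hj (hscinj j i hc)) _ _ _),
        Matrix.single_apply_same,
        zero_add, zero_add] at this
  · intro h p q hpq
    rw [hμ]
    simp only [Matrix.add_apply, Matrix.sum_apply]
    have t1 : Matrix.single (0 : Fin (l+2)) (Fin.last (l+1))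
        (d c - ∑ i : Fin l, σ (a i) * b i) p q = 0 :=
      Matrix.single_apply_of_ne _ _ _ _ _ (fun ⟨e1, e2⟩ => hpq ⟨e1.symm, e2.symm⟩)
    rw [t1,
      Finset.sum_eq_zero (fun i _ => by rw [(h i).1, Matrix.single_zero, Matrix.zero_apply]),
      Finset.sum_eq_zero (fun i _ => by rw [(h i).2, Matrix.single_zero, Matrix.zero_apply]),
      add_zero, add_zero]
end

section
/- (Existence of a compatible complex structure.) Let V be a finite-dimensional real inner product space and ω a nondegenerate alternating bilinear form on V. Then there exists a linear map J : V → V with J ∘ J = −id_V such that the bilinear form (ξ, η) ↦ ω(ξ, J η) is symmetric and positive definite. (Explicitly, one may take J = A ∘ Q^{−1}, where A is the operator with ⟨A ξ, η⟩ = ω(ξ, η) and Q is the positive square root of −A∘A.) -/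
open scoped RealInnerProductSpace
open Finset

/-- existence of a compatible complex structure: on a
finite-dimensional real inner product space with a nondegenerate alternating
bilinear form `ω`, there is a linear map `J` with `J∘J = −id` such that
`(ξ, η) ↦ ω ξ (J η)` is symmetric and positive definite. -/
theorem exists_compatible_complex_structure
    {V : Type*} [NormedAddCommGroup V] [InnerProductSpace ℝ V]
    [FiniteDimensional ℝ V]
    (ω : V →ₗ[ℝ] V →ₗ[ℝ] ℝ)
    (halt : ∀ ξ : V, ω ξ ξ = 0)
    (hnd : ∀ ξ : V, ξ ≠ 0 → ∃ η : V, ω ξ η ≠ 0) :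
    ∃ J : V →ₗ[ℝ] V, J ∘ₗ J = -LinearMap.id ∧
      (∀ ξ η : V, ω ξ (J η) = ω η (J ξ)) ∧
      (∀ ξ : V, ξ ≠ 0 → 0 < ω ξ (J ξ)) := by
  classical
  -- the operator `A` with `⟪A ξ, η⟫ = ω ξ η`
  set c : OrthonormalBasis (Fin (Module.finrank ℝ V)) ℝ V := stdOrthonormalBasis ℝ V with hc
  set A : V →ₗ[ℝ] V := ∑ i, LinearMap.smulRight (ω.flip (c i)) (c i) with hAdef
  have hA : ∀ ξ η : V, ⟪A ξ, η⟫ = ω ξ η := by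
    intro ξ η
    conv_rhs => rw [← c.sum_repr' η]
    rw [map_sum]
    rw [hAdef, LinearMap.sum_apply, sum_inner]
    refine Finset.sum_congr rfl fun i _ => ?_
    simp [real_inner_smul_left, mul_comm]
  clear_value A
  clear hAdef hc
  -- `ω` is skew, hence `A` is skew-adjoint and injective
  have hskew : ∀ ξ η : V, ω ξ η = - ω η ξ := by
    intro ξ η
    have h := halt (ξ + η)
    simp only [map_add, LinearMap.add_apply, halt] at h
    linarith
  have hAskew : ∀ ξ η : V, ⟪A ξ, η⟫ = -⟪ξ, A η⟫ := by
    intro ξ η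
    rw [hA, real_inner_comm, hA, hskew]
  have hAinj : ∀ v : V, A v = 0 → v = 0 := by
    intro v hv
    by_contra h
    obtain ⟨η, hη⟩ := hnd v h
    exact hη (by rw [← hA, hv, inner_zero_left])
  -- the positive symmetric operator `S = -A²`
  set S : V →ₗ[ℝ] V := -(A ∘ₗ A) with hSdef
  have hSapp : ∀ v, S v = -A (A v) := fun v => rfl
  have hSinner : ∀ v w : V, ⟪S v, w⟫ = ⟪A v, A w⟫ := by
    intro v w
    rw [hSapp, inner_neg_left, hAskew, neg_neg]
  have hS : S.IsSymmetric := by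
    intro v w
    rw [hSinner, real_inner_comm, ← hSinner, real_inner_comm]
  -- spectral decomposition of `S`
  set b := hS.eigenvectorBasis rfl with hb
  set μ := hS.eigenvalues rfl with hμ
  have Sb : ∀ i, S (b i) = μ i • b i := by
    intro i
    exact hS.apply_eigenvectorBasis rfl i
  have hμpos : ∀ i, 0 < μ i := by
    intro i
    have h1 : ⟪S (b i), b i⟫ = μ i := by
      rw [Sb, real_inner_smul_left, real_inner_self_eq_norm_sq, b.orthonormal.1 i]
      ring
    have h2 : (0:ℝ) < ⟪S (b i), b i⟫ := by
      rw [hSinner]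
      have hAb : A (b i) ≠ 0 := fun h => by
        have := hAinj _ h
        exact b.toBasis.ne_zero i (by simpa using this)
      rw [real_inner_self_eq_norm_sq]
      exact pow_pos (norm_pos_iff.mpr hAb) 2
    linarith [h1 ▸ h2]
  -- `R = S^{-1/2}`, defined spectrally
  set R : V →ₗ[ℝ] V := ∑ i, (Real.sqrt (μ i))⁻¹ • LinearMap.smulRight (innerₛₗ ℝ (b i)) (b i)
    with hRdef
  have hRapp : ∀ v, R v = ∑ i, ((Real.sqrt (μ i))⁻¹ * ⟪b i, v⟫) • b i := by
    intro v
    rw [hRdef, LinearMap.sum_apply]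
    refine Finset.sum_congr rfl fun i _ => ?_
    simp [LinearMap.smulRight_apply, innerₛₗ_apply_apply, smul_smul]
  -- `R` acts as `(√d)⁻¹` on the `d`-eigenspace of `S`
  have hRe : ∀ (d : ℝ) (v : V), S v = d • v → R v = (Real.sqrt d)⁻¹ • v := by
    intro d v hv
    have hcoef : ∀ i, (Real.sqrt (μ i))⁻¹ * ⟪b i, v⟫ = (Real.sqrt d)⁻¹ * ⟪b i, v⟫ := by
      intro i
      rcases eq_or_ne (⟪b i, v⟫) 0 with h | h
      · rw [h, mul_zero, mul_zero]
      · have h1 : μ i * ⟪b i, v⟫ = d * ⟪b i, v⟫ := by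
          have h2 := hS (b i) v
          rw [Sb i, hv, real_inner_smul_left, real_inner_smul_right] at h2
          exact h2
        rw [mul_right_cancel₀ h h1]
    rw [hRapp]
    simp_rw [hcoef, mul_smul, ← Finset.smul_sum, b.sum_repr']
  have hSA : ∀ v, S (A v) = A (S v) := by
    intro v
    rw [hSapp, hSapp, map_neg]
  -- the key formula for the quadratic form
  set J : V →ₗ[ℝ] V := A ∘ₗ R with hJdef
  have hkey : ∀ ξ η : V, ω ξ (J η) = ∑ i, Real.sqrt (μ i) * (⟪b i, ξ⟫ * ⟪b i, η⟫) := by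
    intro ξ η
    have h1 : ω ξ (J η) = ⟪ξ, S (R η)⟫ := by
      rw [← hA, hJdef, LinearMap.comp_apply, hAskew, ← inner_neg_right, ← hSapp]
    have h2 : S (R η) = ∑ i, (Real.sqrt (μ i) * ⟪b i, η⟫) • b i := by
      rw [hRapp, map_sum]
      refine Finset.sum_congr rfl fun i _ => ?_
      rw [map_smul, Sb i, smul_smul]
      have hne : Real.sqrt (μ i) ≠ 0 := (Real.sqrt_pos.mpr (hμpos i)).ne'
      have h3 : (Real.sqrt (μ i))⁻¹ * μ i = Real.sqrt (μ i) := by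
        rw [inv_mul_eq_iff_eq_mul₀ hne]
        exact (Real.mul_self_sqrt (hμpos i).le).symm
      rw [mul_right_comm, h3]
    rw [h1, h2, inner_sum]
    refine Finset.sum_congr rfl fun i _ => ?_
    rw [real_inner_smul_right, real_inner_comm ξ (b i)]
    ring
  refine ⟨J, ?_, ?_, ?_⟩
  · -- J ∘ J = -id
    apply b.toBasis.ext
    intro i
    have hRb : R (b i) = (Real.sqrt (μ i))⁻¹ • b i := hRe (μ i) (b i) (Sb i)
    have hRAb : R (A (b i)) = (Real.sqrt (μ i))⁻¹ • A (b i) := by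
      refine hRe (μ i) (A (b i)) ?_
      rw [hSA, Sb, map_smul]
    have hAA : A (A (b i)) = -(μ i • b i) := by
      have h := Sb i
      rw [hSapp] at h
      exact neg_eq_iff_eq_neg.mp h
    have hne : Real.sqrt (μ i) ≠ 0 := (Real.sqrt_pos.mpr (hμpos i)).ne'
    have hcalc : (Real.sqrt (μ i))⁻¹ * (Real.sqrt (μ i))⁻¹ * μ i = 1 := by
      rw [← mul_inv, Real.mul_self_sqrt (hμpos i).le]
      exact inv_mul_cancel₀ (hμpos i).ne'
    simp only [LinearMap.comp_apply, LinearMap.neg_apply, LinearMap.id_apply,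
      OrthonormalBasis.coe_toBasis, hJdef]
    rw [hRb, map_smul, map_smul, hRAb, map_smul, map_smul, hAA, smul_neg, smul_neg,
      smul_smul, smul_smul, hcalc, one_smul]
  · -- symmetry
    intro ξ η
    rw [hkey, hkey]
    exact Finset.sum_congr rfl fun i _ => by ring
  · -- positivity
    intro ξ hξ
    rw [hkey]
    refine Finset.sum_pos' (fun i _ => ?_) ?_
    · exact mul_nonneg (Real.sqrt_nonneg _) (mul_self_nonneg _)
    · have : ∃ i, ⟪b i, ξ⟫ ≠ 0 := by
        by_contra h
        push_neg at h
        apply hξ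
        conv_lhs => rw [← b.sum_repr' ξ]
        simp [h]
      obtain ⟨i, hi⟩ := this
      exact ⟨i, Finset.mem_univ i,
        mul_pos (Real.sqrt_pos.mpr (hμpos i)) (mul_self_pos.mpr hi)⟩
end

section
/- Let m ≥ 1 and let 𝒱_{2m} be the real Lie algebra with basis e_1, …, e_{2m} and bracket [e_i, e_j] = (j − i)·e_{i+j} for i + j ≤ 2m (and 0 otherwise). Let Ω_{2m} be the alternating bilinear form on 𝒱_{2m} determined by Ω_{2m}(e_i, e_{2m+1−i}) = 2(m − i) + 1 for 1 ≤ i ≤ m, by antisymmetry, and by Ω_{2m}(e_i, e_j) = 0 whenever i + j ≠ 2m + 1. Then Ω_{2m} is a Lie algebra 2-cocycle: Ω_{2m}([x,y], z) + Ω_{2m}([y,z], x) + Ω_{2m}([z,x], y) = 0 for all x, y, z ∈ 𝒱_{2m}. (This is the closedness of the left-invariant 2-form Ω_{2m} = (2m−1) ω_1∧ω_{2m} + (2m−3) ω_2∧ω_{2m−1} + … + ω_m∧ω_{m+1} on the nilpotent Lie group V_{2m}.) -/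
/-- The bracket of the Lie algebra `𝒱_n` (basis `e_1, …, e_n`, 0-indexed):
`[e_i, e_j] = (j − i)·e_{i+j}` for `i + j ≤ n` and `0` otherwise. -/
def wittBracket (n : ℕ) (x y : Fin n → ℝ) : Fin n → ℝ :=
  fun k => ∑ p : Fin n, ∑ q : Fin n,
    x p * y q * (if (k : ℕ) = (p : ℕ) + (q : ℕ) + 1
      then ((q : ℕ) : ℝ) - ((p : ℕ) : ℝ) else 0)

/-- The alternating bilinear form `Ω_{2m}` on `𝒱_{2m}`:
`Ω(e_i, e_{2m+1−i}) = 2(m−i)+1` for `1 ≤ i ≤ m`, extended by antisymmetry,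
and `Ω(e_i, e_j) = 0` for `i + j ≠ 2m+1`.  (In 0-indexed coordinates the
coefficient at `(p, q)` with `p + q + 1 = 2m` is `2m − 2p − 1`.) -/
def symplecticForm (m : ℕ) (x y : Fin (2 * m) → ℝ) : ℝ :=
  ∑ p : Fin (2 * m), ∑ q : Fin (2 * m),
    x p * y q * (if (p : ℕ) + (q : ℕ) + 1 = 2 * m
      then 2 * (m : ℝ) - 2 * ((p : ℕ) : ℝ) - 1 else 0)

noncomputable def Eker (m : ℕ) (a b c : Fin (2 * m)) : ℝ :=
  if (a : ℕ) + (b : ℕ) + (c : ℕ) + 2 = 2 * m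
    then (((b : ℕ) : ℝ) - ((a : ℕ) : ℝ)) *
      (2 * (m : ℝ) - 2 * ((a : ℕ) : ℝ) - 2 * ((b : ℕ) : ℝ) - 3)
    else 0

lemma collapse {n : ℕ} (t : ℕ) (c : Fin n) (B : ℝ) (g : ℕ → ℝ) :
    ∑ p : Fin n, (if (p : ℕ) = t then B else 0) *
        (if (p : ℕ) + (c : ℕ) + 1 = n then g (p : ℕ) else 0)
      = if t + (c : ℕ) + 1 = n then B * g t else 0 := by
  split
  case isTrue h =>
    have ht : t < n := by omega
    rw [Finset.sum_eq_single (⟨t, ht⟩ : Fin n)]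
    · simp [h]
    · intro p _ hp
      have : (p : ℕ) ≠ t := fun hh => hp (Fin.ext hh)
      simp [this]
    · simp
  case isFalse h =>
    apply Finset.sum_eq_zero; intro p _
    by_cases h1 : (p : ℕ) = t
    · have h2 : ¬((p : ℕ) + (c : ℕ) + 1 = n) := by omega
      simp [h2]
    · simp [h1]

lemma expand (m : ℕ) (x y z : Fin (2 * m) → ℝ) :
    symplecticForm m (wittBracket (2 * m) x y) z
      = ∑ a : Fin (2 * m), ∑ b : Fin (2 * m), ∑ c : Fin (2 * m),
          x a * y b * z c * Eker m a b c := by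
  simp only [symplecticForm, wittBracket]
  rw [Finset.sum_comm]
  have step2 : ∀ c : Fin (2 * m),
      (∑ p : Fin (2 * m),
        (∑ a : Fin (2 * m), ∑ b : Fin (2 * m),
          x a * y b * (if (p : ℕ) = (a : ℕ) + (b : ℕ) + 1
            then ((b : ℕ) : ℝ) - ((a : ℕ) : ℝ) else 0))
          * z c * (if (p : ℕ) + (c : ℕ) + 1 = 2 * m
            then 2 * (m : ℝ) - 2 * ((p : ℕ) : ℝ) - 1 else 0))
      = ∑ a : Fin (2 * m), ∑ b : Fin (2 * m), x a * y b * z c * Eker m a b c := by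
    intro c
    simp only [Finset.sum_mul]
    rw [Finset.sum_comm]
    refine Finset.sum_congr rfl fun a _ => ?_
    rw [Finset.sum_comm]
    refine Finset.sum_congr rfl fun b _ => ?_
    have h1 : ∀ p : Fin (2 * m),
        (x a * y b * (if (p : ℕ) = (a : ℕ) + (b : ℕ) + 1
            then ((b : ℕ) : ℝ) - ((a : ℕ) : ℝ) else 0))
          * z c * (if (p : ℕ) + (c : ℕ) + 1 = 2 * m
            then 2 * (m : ℝ) - 2 * ((p : ℕ) : ℝ) - 1 else 0)
        = (x a * y b * z c) *
            ((if (p : ℕ) = (a : ℕ) + (b : ℕ) + 1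
                then ((b : ℕ) : ℝ) - ((a : ℕ) : ℝ) else 0) *
             (if (p : ℕ) + (c : ℕ) + 1 = 2 * m
                then (fun k : ℕ => 2 * (m : ℝ) - 2 * (k : ℝ) - 1) (p : ℕ) else 0)) := by
      intro p; ring
    rw [Finset.sum_congr rfl fun p _ => h1 p, ← Finset.mul_sum,
      collapse ((a : ℕ) + (b : ℕ) + 1) c (((b : ℕ) : ℝ) - ((a : ℕ) : ℝ))
        (fun k : ℕ => 2 * (m : ℝ) - 2 * (k : ℝ) - 1)]
    unfold Eker
    by_cases h : (a : ℕ) + (b : ℕ) + (c : ℕ) + 2 = 2 * m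
    · rw [if_pos (show (a : ℕ) + (b : ℕ) + 1 + (c : ℕ) + 1 = 2 * m by omega), if_pos h]
      push_cast; ring
    · rw [if_neg (show ¬((a : ℕ) + (b : ℕ) + 1 + (c : ℕ) + 1 = 2 * m) by omega), if_neg h]
  rw [Finset.sum_congr rfl fun c _ => step2 c, Finset.sum_comm]
  exact Finset.sum_congr rfl fun a _ => Finset.sum_comm

lemma cyc {n : ℕ} (f : Fin n → Fin n → Fin n → ℝ) :
    ∑ a : Fin n, ∑ b : Fin n, ∑ c : Fin n, f a b c
      = ∑ b : Fin n, ∑ c : Fin n, ∑ a : Fin n, f a b c := by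
  rw [Finset.sum_comm]
  exact Finset.sum_congr rfl fun b _ => Finset.sum_comm

lemma Eker_cyc (m : ℕ) (i j k : Fin (2 * m)) :
    Eker m i j k + Eker m j k i + Eker m k i j = 0 := by
  unfold Eker
  by_cases h : (i : ℕ) + (j : ℕ) + (k : ℕ) + 2 = 2 * m
  · rw [if_pos h, if_pos (show (j : ℕ) + (k : ℕ) + (i : ℕ) + 2 = 2 * m by omega),
      if_pos (show (k : ℕ) + (i : ℕ) + (j : ℕ) + 2 = 2 * m by omega)]
    ring
  · rw [if_neg h, if_neg (show ¬((j : ℕ) + (k : ℕ) + (i : ℕ) + 2 = 2 * m) by omega),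
      if_neg (show ¬((k : ℕ) + (i : ℕ) + (j : ℕ) + 2 = 2 * m) by omega)]
    ring

/-- `Ω_{2m}` is a Lie algebra 2-cocycle on `𝒱_{2m}` (the
left-invariant form `Ω_{2m}` on `V_{2m}` is closed). -/
theorem symplecticForm_cocycle (m : ℕ) (hm : 1 ≤ m) :
    ∀ x y z : Fin (2 * m) → ℝ,
      symplecticForm m (wittBracket (2 * m) x y) z
        + symplecticForm m (wittBracket (2 * m) y z) x
        + symplecticForm m (wittBracket (2 * m) z x) y = 0 := by
  intro x y z
  rw [expand m x y z, expand m y z x, expand m z x y,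
    cyc (fun a b c => y a * z b * x c * Eker m a b c),
    cyc (fun a b c => y c * z a * x b * Eker m c a b),
    cyc (fun a b c => z a * x b * y c * Eker m a b c)]
  simp only [← Finset.sum_add_distrib]
  apply Finset.sum_eq_zero; intro i _
  apply Finset.sum_eq_zero; intro j _
  apply Finset.sum_eq_zero; intro k _
  linear_combination (x i * y j * z k) * Eker_cyc m i j k
end

section
/- Let m ≥ 1 and let 𝒱_{2m} be the real Lie algebra with basis e_1, …, e_{2m} and bracket [e_i, e_j] = (j − i)·e_{i+j} for i + j ≤ 2m (and 0 otherwise). The alternating bilinear form Ω_{2m} determined by Ω_{2m}(e_i, e_{2m+1−i}) = 2(m − i) + 1 for 1 ≤ i ≤ m, antisymmetry, and Ω_{2m}(e_i, e_j) = 0 for i + j ≠ 2m + 1, is nondegenerate: for every nonzero x ∈ 𝒱_{2m} there exists y ∈ 𝒱_{2m} with Ω_{2m}(x, y) ≠ 0. Together with its cocycle property this shows Ω_{2m} defines a left-invariant symplectic structure on the nilpotent Lie group V_{2m}. -/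
/-- the form `Ω_{2m}` is nondegenerate: every nonzero
`x ∈ 𝒱_{2m}` pairs nontrivially with some `y`. -/
theorem symplecticForm_nondegenerate (m : ℕ) (hm : 1 ≤ m) :
    ∀ x : Fin (2 * m) → ℝ, x ≠ 0 → ∃ y : Fin (2 * m) → ℝ,
      symplecticForm m x y ≠ 0 := by
  intro x hx
  obtain ⟨p, hp⟩ : ∃ p, x p ≠ 0 := by
    by_contra h
    push_neg at h
    exact hx (funext h)
  have hplt : (p : ℕ) < 2 * m := p.2
  have hq : 2 * m - 1 - (p : ℕ) < 2 * m := by omega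
  set q : Fin (2 * m) := ⟨2 * m - 1 - (p : ℕ), hq⟩ with hqdef
  refine ⟨Pi.single q 1, ?_⟩
  have hterm : ∀ p' : Fin (2 * m),
      (∑ q' : Fin (2 * m), x p' * (Pi.single q 1 : Fin (2 * m) → ℝ) q' *
        (if (p' : ℕ) + (q' : ℕ) + 1 = 2 * m
          then 2 * (m : ℝ) - 2 * ((p' : ℕ) : ℝ) - 1 else 0)) =
      x p' * (if (p' : ℕ) + (q : ℕ) + 1 = 2 * m
          then 2 * (m : ℝ) - 2 * ((p' : ℕ) : ℝ) - 1 else 0) := by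
    intro p'
    rw [Finset.sum_eq_single q]
    · simp
    · intro q' _ hne
      rw [Pi.single_eq_of_ne hne]
      ring
    · intro h; exact absurd (Finset.mem_univ q) h
  unfold symplecticForm
  simp only [hterm]
  rw [Finset.sum_eq_single p]
  · have : (p : ℕ) + (q : ℕ) + 1 = 2 * m := by simp [hqdef]; omega
    rw [if_pos this]
    have hcoef : 2 * (m : ℝ) - 2 * ((p : ℕ) : ℝ) - 1 ≠ 0 := by
      intro h
      have h2 : (2 * m : ℝ) = 2 * ((p : ℕ) : ℝ) + 1 := by push_cast; linarith
      have h3 : 2 * m = 2 * (p : ℕ) + 1 := by exact_mod_cast h2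
      omega
    exact mul_ne_zero hp hcoef
  · intro p' _ hne
    have : ¬ ((p' : ℕ) + (q : ℕ) + 1 = 2 * m) := by
      simp only [hqdef]
      intro h
      apply hne
      apply Fin.ext
      omega
    rw [if_neg this, mul_zero]
  · intro h; exact absurd (Finset.mem_univ p) h
end

section
/- Let m ≥ 1 and let 𝒱_{2m} be the real Lie algebra with basis e_1, …, e_{2m} and bracket [e_i, e_j] = (j − i)·e_{i+j} for i + j ≤ 2m (and 0 otherwise), and let Ω_{2m} be the alternating form with Ω_{2m}(e_i, e_{2m+1−i}) = 2(m − i) + 1 for 1 ≤ i ≤ m, antisymmetry, and Ω_{2m}(e_i, e_j) = 0 for i + j ≠ 2m + 1. Then Ω_{2m} is not a Chevalley–Eilenberg coboundary: there is no linear functional η : 𝒱_{2m} → ℝ such that Ω_{2m}(x, y) = η([x, y]) for all x, y ∈ 𝒱_{2m}. Hence the 2-cocycle Ω_{2m} represents a nonzero degree-2 Lie algebra cohomology class (the symplectic class of the nilmanifold M(2m) is a nontrivial cohomology class). -/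
/-- `Ω_{2m}` is not a Chevalley–Eilenberg coboundary: there is no
linear functional `η` on `𝒱_{2m}` with `Ω_{2m}(x, y) = η([x, y])` for all
`x, y`; hence the cocycle `Ω_{2m}` represents a nonzero degree-2 Lie algebra
cohomology class. -/
theorem symplecticForm_not_coboundary (m : ℕ) (hm : 1 ≤ m) :
    ¬ ∃ η : (Fin (2 * m) → ℝ) →ₗ[ℝ] ℝ,
      ∀ x y : Fin (2 * m) → ℝ,
        symplecticForm m x y = η (wittBracket (2 * m) x y) := by
  rintro ⟨η, hη⟩
  have h2m : 0 < 2 * m := by omega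
  set i0 : Fin (2 * m) := ⟨0, h2m⟩
  set i1 : Fin (2 * m) := ⟨2 * m - 1, by omega⟩
  have key := hη (Pi.single i0 1) (Pi.single i1 1)
  have hbr : wittBracket (2 * m) (Pi.single i0 1) (Pi.single i1 1) = 0 := by
    funext k
    unfold wittBracket
    simp only [Pi.zero_apply]
    rw [Finset.sum_eq_zero]
    intro p _
    rw [Finset.sum_eq_zero]
    intro q _
    rcases eq_or_ne p i0 with hp | hp
    · rcases eq_or_ne q i1 with hq | hq
      · subst hp; subst hq
        have hk : (k : ℕ) ≠ (i0 : ℕ) + (i1 : ℕ) + 1 := by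
          have := k.isLt
          simp only [i0, i1]
          omega
        rw [if_neg hk, mul_zero]
      · simp [Pi.single_apply, hq]
    · simp [Pi.single_apply, hp]
  have hsf : symplecticForm m (Pi.single i0 1) (Pi.single i1 1)
      = 2 * (m : ℝ) - 1 := by
    unfold symplecticForm
    rw [Finset.sum_eq_single i0]
    · rw [Finset.sum_eq_single i1]
      · have hc : ((i0 : ℕ) + (i1 : ℕ) + 1 = 2 * m) := by
          simp only [i0, i1]; omega
        rw [if_pos hc]
        have h0 : (((i0 : Fin (2*m)) : ℕ) : ℝ) = 0 := by simp [i0]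
        rw [Pi.single_eq_same, Pi.single_eq_same, h0]; ring
      · intro q _ hq; simp [Pi.single_apply, hq]
      · intro h; exact absurd (Finset.mem_univ i1) h
    · intro p _ hp
      rw [Finset.sum_eq_zero]; intro q _; simp [Pi.single_apply, hp]
    · intro h; exact absurd (Finset.mem_univ i0) h
  rw [hbr, map_zero, hsf] at key
  have : (1:ℝ) ≤ (m:ℝ) := by exact_mod_cast hm
  linarith
end
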